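/- arXiv:2310.09251 — 2 statements merged into one kernel-verified Lean document; each statement's English description precedes it below -/
import Mathlib

section
/- Let I ⊆ ℝ be an interval, φ : I → ℝ be concave and differentiable, u : ℝ^N → I, and x ∈ ℝ^N be such that both y ↦ (u(x)−u(y))/|x−y|^{N+2s} and y ↦ (φ(u(x))−φ(u(y)))/|x−y|^{N+2s} are Lebesgue integrable on ℝ^N. Then C_{N,s} ∫_{ℝ^N} (φ(u(x))−φ(u(y)))/|x−y|^{N+2s} dy ≥ φ'(u(x)) · C_{N,s} ∫_{ℝ^N} (u(x)−u(y))/|x−y|^{N+2s} dy; that is, (−Δ)^s(φ∘u)(x) ≥ φ'(u(x)) (−Δ)^s u(x). -/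
/-!
Concavity gives the tangent-line inequality `φ'(a) (a - b) ≤ φ(a) - φ(b)` on `I`. Taking
`a = u x`, `b = u y`, dividing by the nonnegative kernel `|x - y|^{N+2s}` and integrating
yields the claim, since `C_{N,s} ≥ 0`.
-/

open MeasureTheory Real Filter

noncomputable section

abbrev En (N : ℕ) := EuclideanSpace ℝ (Fin N)

/-- The fractional Laplacian constant `C_{N,s}`. -/
def Cns (N : ℕ) (s : ℝ) : ℝ :=
  4 ^ s * Real.Gamma (((N : ℝ) + 2 * s) / 2) /
    (Real.pi ^ ((N : ℝ) / 2) * |Real.Gamma (-s)|)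

theorem ConcaveOn.mul_sub_le_sub_of_hasDerivAt {I : Set ℝ} {φ : ℝ → ℝ} {a b φ'a : ℝ}
    (hφ : ConcaveOn ℝ I φ) (ha : a ∈ I) (hb : b ∈ I) (hderiv : HasDerivAt φ φ'a a) :
    φ'a * (a - b) ≤ φ a - φ b := by
  rcases lt_trichotomy b a with hba | rfl | hab
  · have hslope := hφ.le_slope_of_hasDerivAt hb ha hba hderiv
    rwa [slope_def_field, le_div_iff₀ (sub_pos.2 hba)] at hslope
  · simp
  · have hslope := hφ.slope_le_of_hasDerivAt ha hb hab hderiv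
    rw [slope_def_field, div_le_iff₀ (sub_pos.2 hab)] at hslope
    linarith

theorem ConcaveOn.mul_integral_sub_div_le {α : Type*} [MeasurableSpace α] {μ : Measure α}
    {I : Set ℝ} {φ : ℝ → ℝ} {φ'a a : ℝ} {f w : α → ℝ}
    (hφ : ConcaveOn ℝ I φ) (ha : a ∈ I) (hderiv : HasDerivAt φ φ'a a)
    (hf : ∀ y, f y ∈ I) (hw : ∀ y, 0 ≤ w y)
    (hint₁ : Integrable (fun y => (a - f y) / w y) μ)
    (hint₂ : Integrable (fun y => (φ a - φ (f y)) / w y) μ) :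
    φ'a * ∫ y, (a - f y) / w y ∂μ ≤ ∫ y, (φ a - φ (f y)) / w y ∂μ := by
  rw [← integral_const_mul]
  refine integral_mono (hint₁.const_mul _) hint₂ fun y => ?_
  rw [mul_div_assoc']
  exact div_le_div_of_nonneg_right (hφ.mul_sub_le_sub_of_hasDerivAt ha (hf y) hderiv) (hw y)

theorem Cns_nonneg (N : ℕ) {s : ℝ} (hs : 0 ≤ s) : 0 ≤ Cns N s := by
  unfold Cns
  positivity

theorem pointwise_concave_chain_rule_general
    (N : ℕ) (s : ℝ) (hs : s ∈ Set.Ioo (0 : ℝ) 1)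
    (I : Set ℝ)
    (φ φ' : ℝ → ℝ) (hconc : ConcaveOn ℝ I φ)
    (hφ : ∀ t ∈ I, HasDerivAt φ (φ' t) t)
    (u : En N → ℝ) (humem : ∀ y, u y ∈ I)
    (x : En N)
    (hint₁ : Integrable fun y => (u x - u y) / ‖x - y‖ ^ ((N : ℝ) + 2 * s))
    (hint₂ : Integrable fun y => (φ (u x) - φ (u y)) / ‖x - y‖ ^ ((N : ℝ) + 2 * s)) :
    φ' (u x) * (Cns N s * ∫ y, (u x - u y) / ‖x - y‖ ^ ((N : ℝ) + 2 * s)) ≤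
      Cns N s * ∫ y, (φ (u x) - φ (u y)) / ‖x - y‖ ^ ((N : ℝ) + 2 * s) := by
  have hintegral := hconc.mul_integral_sub_div_le (humem x) (hφ _ (humem x)) humem
    (fun y => rpow_nonneg (norm_nonneg (x - y)) _) hint₁ hint₂
  rw [mul_left_comm]
  exact mul_le_mul_of_nonneg_left hintegral (Cns_nonneg N hs.1.le)

theorem pointwise_concave_chain_rule
    (N : ℕ) (hN : 2 ≤ N) (s : ℝ) (hs : s ∈ Set.Ioo (0 : ℝ) 1)
    (I : Set ℝ) (hI : I.OrdConnected)
    (φ φ' : ℝ → ℝ) (hconc : ConcaveOn ℝ I φ)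
    (hφ : ∀ t ∈ I, HasDerivAt φ (φ' t) t)
    (u : En N → ℝ) (humem : ∀ y, u y ∈ I)
    (x : En N)
    (hint₁ : Integrable fun y => (u x - u y) / ‖x - y‖ ^ ((N : ℝ) + 2 * s))
    (hint₂ : Integrable fun y => (φ (u x) - φ (u y)) / ‖x - y‖ ^ ((N : ℝ) + 2 * s)) :
    φ' (u x) * (Cns N s * ∫ y, (u x - u y) / ‖x - y‖ ^ ((N : ℝ) + 2 * s)) ≤
      Cns N s * ∫ y, (φ (u x) - φ (u y)) / ‖x - y‖ ^ ((N : ℝ) + 2 * s) :=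
  pointwise_concave_chain_rule_general N s hs I φ φ' hconc hφ u humem x hint₁ hint₂

end
end

section
/- Let Ω ⊆ ℝ^N be open, λ > 0, and let u : ℝ^N → ℝ be continuous and bounded with u(x) ≤ 0 for every x ∈ Ωᶜ and limsup_{|x|→∞} u(x) ≤ 0 (i.e., for every ε > 0 there is R > 0 with u(x) ≤ ε whenever |x| ≥ R). Assume that for every x₀ ∈ Ω at which u attains its global maximum over ℝ^N with u(x₀) > 0, one has C_{N,s} ∫_{ℝ^N} (u(x₀)−u(y))/|x₀−y|^{N+2s} dy + λ u(x₀) ≤ 0 (the integral being well defined in [0,+∞] since the integrand is nonnegative). Then u(x) ≤ 0 for every x ∈ ℝ^N. -/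
open MeasureTheory Real Filter

noncomputable section

/-! At a point `x` with `u x > 0`, the decay at infinity confines the supremum of `u` to a
compact ball, so `u` attains a positive global maximum at some `x₀`, which lies in `Ω` since
`u ≤ 0` off `Ω`. There the nonlocal term is nonnegative, so the hypothesis forces
`λ u(x₀) ≤ 0`, a contradiction. -/

theorem Continuous.exists_forall_ge_of_le_of_norm_ge {E α : Type*} [NormedAddCommGroup E]
    [ProperSpace E] [ConditionallyCompleteLinearOrder α] [TopologicalSpace α] [OrderTopology α]
    {u : E → α} (hu : Continuous u) (x : E) {R : ℝ} (hR : ∀ y, R ≤ ‖y‖ → u y ≤ u x) :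
    ∃ x₀, ∀ y, u y ≤ u x₀ :=
  hu.exists_forall_ge' x <| (tendsto_norm_cocompact_atTop.eventually_ge_atTop R).mono hR

theorem viscosity_maximum_principle_general
    (N : ℕ) (s lam : ℝ)
    (hlam : 0 < lam)
    (Ω : Set (En N))
    (u : En N → ℝ) (huc : Continuous u)
    (hbd : ∀ x, x ∉ Ω → u x ≤ 0)
    (hlimsup : ∀ ε > (0 : ℝ), ∃ R > (0 : ℝ), ∀ x : En N, R ≤ ‖x‖ → u x ≤ ε)
    (hsub : ∀ x₀ ∈ Ω, (∀ y, u y ≤ u x₀) → 0 < u x₀ →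
      ENNReal.ofReal (Cns N s) *
          (∫⁻ y, ENNReal.ofReal ((u x₀ - u y) / ‖x₀ - y‖ ^ ((N : ℝ) + 2 * s)))
        + ENNReal.ofReal (lam * u x₀) ≤ 0) :
    ∀ x, u x ≤ 0 := by
  by_contra! ⟨x, hx⟩
  obtain ⟨R, -, hR⟩ := hlimsup (u x / 2) (half_pos hx)
  obtain ⟨x₀, hmax⟩ := huc.exists_forall_ge_of_le_of_norm_ge x
    fun y hy => (hR y hy).trans (half_le_self hx.le)
  have hpos : 0 < u x₀ := hx.trans_le (hmax x)
  have hx₀ : x₀ ∈ Ω := by_contra fun h => (hbd x₀ h).not_gt hpos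
  have hlam_nonpos : lam * u x₀ ≤ 0 :=
    ENNReal.ofReal_eq_zero.1 (add_eq_zero.1 (nonpos_iff_eq_zero.1 (hsub x₀ hx₀ hmax hpos))).2
  exact hlam_nonpos.not_gt (mul_pos hlam hpos)

theorem viscosity_maximum_principle
    (N : ℕ) (hN : 2 ≤ N) (s lam : ℝ)
    (hs : s ∈ Set.Ioo (0 : ℝ) 1) (hlam : 0 < lam)
    (Ω : Set (En N)) (hΩ : IsOpen Ω)
    (u : En N → ℝ) (huc : Continuous u) (hub : ∃ B : ℝ, ∀ x, |u x| ≤ B)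
    (hbd : ∀ x, x ∉ Ω → u x ≤ 0)
    (hlimsup : ∀ ε > (0 : ℝ), ∃ R > (0 : ℝ), ∀ x : En N, R ≤ ‖x‖ → u x ≤ ε)
    (hsub : ∀ x₀ ∈ Ω, (∀ y, u y ≤ u x₀) → 0 < u x₀ →
      ENNReal.ofReal (Cns N s) *
          (∫⁻ y, ENNReal.ofReal ((u x₀ - u y) / ‖x₀ - y‖ ^ ((N : ℝ) + 2 * s)))
        + ENNReal.ofReal (lam * u x₀) ≤ 0) :
    ∀ x, u x ≤ 0 :=
  viscosity_maximum_principle_general N s lam hlam Ω u huc hbd hlimsup hsub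

end
end
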